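/- arXiv:2410.09914 — 4 statements merged into one kernel-verified Lean document; each statement's English description precedes it below -/
import Mathlib

section
/- Define f(Q) = −(1/2)|Q|² − tr(Q³) + (3/4)|Q|⁴ + 2/9 on the space 𝒮₀ of symmetric traceless 3×3 real matrices, where |Q|² = tr(Q²). Then f(Q) ≥ 0 for all Q ∈ 𝒮₀, and f(Q) = 0 if and only if Q = n⊗n − (1/3)I for some unit vector n ∈ S². -/
open Finset

set_option maxHeartbeats 1000000

lemma proj_aux (p00 p01 p02 p11 p12 p22 : ℝ)
    (htr : p00 + p11 + p22 = 1)
    (F00 : p00^2 + p01^2 + p02^2 = p00)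
    (F01 : p00*p01 + p01*p11 + p02*p12 = p01)
    (F02 : p00*p02 + p01*p12 + p02*p22 = p02)
    (F11 : p01^2 + p11^2 + p12^2 = p11)
    (F12 : p01*p02 + p11*p12 + p12*p22 = p12)
    (F22 : p02^2 + p12^2 + p22^2 = p22)
    (hpos : 0 < p00) :
    ∃ n0 n1 n2 : ℝ, n0^2 + n1^2 + n2^2 = 1 ∧ n0*n0 = p00 ∧ n0*n1 = p01 ∧
      n0*n2 = p02 ∧ n1*n1 = p11 ∧ n1*n2 = p12 ∧ n2*n2 = p22 := by
  have M1 : p00*p11 = p01^2 := by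
    linear_combination F22 - (1/2)*F00 - (1/2)*F11 - (1/2)*F22
      + ((p00+p11+p22)/2 - p22) * htr
  have M2 : p00*p12 = p01*p02 := by
    linear_combination -F12 + p12 * htr
  have M3 : p00*p22 = p02^2 := by
    linear_combination F11 - (1/2)*F00 - (1/2)*F11 - (1/2)*F22
      + ((p00+p11+p22)/2 - p11) * htr
  have hs0 : Real.sqrt p00 ≠ 0 := by positivity
  have hs : Real.sqrt p00 * Real.sqrt p00 = p00 := Real.mul_self_sqrt hpos.le
  refine ⟨Real.sqrt p00, p01 / Real.sqrt p00, p02 / Real.sqrt p00, ?_, ?_, ?_, ?_, ?_, ?_, ?_⟩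
  · field_simp
    linear_combination F00 + (Real.sqrt p00 ^ 2 + p00 - 1) * hs
  · exact hs
  · field_simp
  · field_simp
  · field_simp
    linear_combination M1.symm + (-p11) * hs
  · field_simp
    linear_combination M2.symm + (-p12) * hs
  · field_simp
    linear_combination M3.symm + (-p22) * hs

/-- The Landau–de Gennes bulk potential
`f(Q) = −(1/2)|Q|² − tr(Q³) + (3/4)|Q|⁴ + 2/9` is nonnegative on symmetric traceless
`3×3` matrices, and vanishes exactly on the uniaxial manifold
`𝒩 = {n⊗n − (1/3)I : n ∈ S²}`. -/
theorem stmt4 (Q : Matrix (Fin 3) (Fin 3) ℝ)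
    (hsymm : Q.transpose = Q) (htr : Q.trace = 0)
    (f : ℝ) (hf : f = -(1/2) * (∑ i, ∑ j, Q i j ^ 2) - (Q * Q * Q).trace
      + (3/4) * (∑ i, ∑ j, Q i j ^ 2) ^ 2 + 2/9) :
    0 ≤ f ∧
    (f = 0 ↔ ∃ n : Fin 3 → ℝ, (∑ i, n i ^ 2 = 1) ∧
      Q = Matrix.vecMulVec n n - (1/3 : ℝ) • (1 : Matrix (Fin 3) (Fin 3) ℝ)) := by
  have hsym' : ∀ i j, Q i j = Q j i := fun i j => by
    conv_lhs => rw [← hsymm]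
    exact Matrix.transpose_apply Q i j
  have h10 : Q 1 0 = Q 0 1 := hsym' 1 0
  have h20 : Q 2 0 = Q 0 2 := hsym' 2 0
  have h21 : Q 2 1 = Q 1 2 := hsym' 2 1
  have h22 : Q 2 2 = -Q 0 0 - Q 1 1 := by
    have h := htr
    simp [Matrix.trace, Fin.sum_univ_three] at h
    linarith
  simp only [Matrix.trace, Matrix.diag, Matrix.mul_apply, Fin.sum_univ_three] at hf
  rw [h10, h20, h21, h22] at hf
  have hkey : f = 3/2 * (
        ((Q 0 0)^2 + (Q 0 1)^2 + (Q 0 2)^2 - (Q 0 0)/3 - 2/9)^2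
      + ((Q 0 1)^2 + (Q 1 1)^2 + (Q 1 2)^2 - (Q 1 1)/3 - 2/9)^2
      + ((Q 0 2)^2 + (Q 1 2)^2 + ((Q 0 0)+(Q 1 1))^2 + ((Q 0 0)+(Q 1 1))/3 - 2/9)^2
      + 2 * ((Q 0 0)*(Q 0 1) + (Q 0 1)*(Q 1 1) + (Q 0 2)*(Q 1 2) - (Q 0 1)/3)^2
      + 2 * ((Q 0 0)*(Q 0 2) + (Q 0 1)*(Q 1 2) + (Q 0 2)*(-(Q 0 0)-(Q 1 1)) - (Q 0 2)/3)^2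
      + 2 * ((Q 0 1)*(Q 0 2) + (Q 1 1)*(Q 1 2) + (Q 1 2)*(-(Q 0 0)-(Q 1 1)) - (Q 1 2)/3)^2) := by
    rw [hf]; ring
  refine ⟨by rw [hkey]; positivity, ?_, ?_⟩
  · -- forward direction
    intro hf0
    have hS : ((Q 0 0)^2 + (Q 0 1)^2 + (Q 0 2)^2 - (Q 0 0)/3 - 2/9)^2
      + ((Q 0 1)^2 + (Q 1 1)^2 + (Q 1 2)^2 - (Q 1 1)/3 - 2/9)^2
      + ((Q 0 2)^2 + (Q 1 2)^2 + ((Q 0 0)+(Q 1 1))^2 + ((Q 0 0)+(Q 1 1))/3 - 2/9)^2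
      + 2 * ((Q 0 0)*(Q 0 1) + (Q 0 1)*(Q 1 1) + (Q 0 2)*(Q 1 2) - (Q 0 1)/3)^2
      + 2 * ((Q 0 0)*(Q 0 2) + (Q 0 1)*(Q 1 2) + (Q 0 2)*(-(Q 0 0)-(Q 1 1)) - (Q 0 2)/3)^2
      + 2 * ((Q 0 1)*(Q 0 2) + (Q 1 1)*(Q 1 2) + (Q 1 2)*(-(Q 0 0)-(Q 1 1)) - (Q 1 2)/3)^2 = 0 := by
      rw [hf0] at hkey; linarith
    have hN00 : (Q 0 0)^2 + (Q 0 1)^2 + (Q 0 2)^2 - (Q 0 0)/3 - 2/9 = 0 := by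
      have hle : ((Q 0 0)^2 + (Q 0 1)^2 + (Q 0 2)^2 - (Q 0 0)/3 - 2/9)^2 ≤ 0 := by
        linarith [sq_nonneg ((Q 0 1)^2 + (Q 1 1)^2 + (Q 1 2)^2 - (Q 1 1)/3 - 2/9),
          sq_nonneg ((Q 0 2)^2 + (Q 1 2)^2 + ((Q 0 0)+(Q 1 1))^2 + ((Q 0 0)+(Q 1 1))/3 - 2/9),
          sq_nonneg ((Q 0 0)*(Q 0 1) + (Q 0 1)*(Q 1 1) + (Q 0 2)*(Q 1 2) - (Q 0 1)/3),
          sq_nonneg ((Q 0 0)*(Q 0 2) + (Q 0 1)*(Q 1 2) + (Q 0 2)*(-(Q 0 0)-(Q 1 1)) - (Q 0 2)/3),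
          sq_nonneg ((Q 0 1)*(Q 0 2) + (Q 1 1)*(Q 1 2) + (Q 1 2)*(-(Q 0 0)-(Q 1 1)) - (Q 1 2)/3)]
      have hsq : ((Q 0 0)^2 + (Q 0 1)^2 + (Q 0 2)^2 - (Q 0 0)/3 - 2/9)^2 = 0 := le_antisymm hle (sq_nonneg _)
      exact pow_eq_zero_iff two_ne_zero |>.mp hsq
    have hN11 : (Q 0 1)^2 + (Q 1 1)^2 + (Q 1 2)^2 - (Q 1 1)/3 - 2/9 = 0 := by
      have hle : ((Q 0 1)^2 + (Q 1 1)^2 + (Q 1 2)^2 - (Q 1 1)/3 - 2/9)^2 ≤ 0 := by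
        linarith [sq_nonneg ((Q 0 0)^2 + (Q 0 1)^2 + (Q 0 2)^2 - (Q 0 0)/3 - 2/9),
          sq_nonneg ((Q 0 2)^2 + (Q 1 2)^2 + ((Q 0 0)+(Q 1 1))^2 + ((Q 0 0)+(Q 1 1))/3 - 2/9),
          sq_nonneg ((Q 0 0)*(Q 0 1) + (Q 0 1)*(Q 1 1) + (Q 0 2)*(Q 1 2) - (Q 0 1)/3),
          sq_nonneg ((Q 0 0)*(Q 0 2) + (Q 0 1)*(Q 1 2) + (Q 0 2)*(-(Q 0 0)-(Q 1 1)) - (Q 0 2)/3),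
          sq_nonneg ((Q 0 1)*(Q 0 2) + (Q 1 1)*(Q 1 2) + (Q 1 2)*(-(Q 0 0)-(Q 1 1)) - (Q 1 2)/3)]
      have hsq : ((Q 0 1)^2 + (Q 1 1)^2 + (Q 1 2)^2 - (Q 1 1)/3 - 2/9)^2 = 0 := le_antisymm hle (sq_nonneg _)
      exact pow_eq_zero_iff two_ne_zero |>.mp hsq
    have hN22 : (Q 0 2)^2 + (Q 1 2)^2 + ((Q 0 0)+(Q 1 1))^2 + ((Q 0 0)+(Q 1 1))/3 - 2/9 = 0 := by
      have hle : ((Q 0 2)^2 + (Q 1 2)^2 + ((Q 0 0)+(Q 1 1))^2 + ((Q 0 0)+(Q 1 1))/3 - 2/9)^2 ≤ 0 := by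
        linarith [sq_nonneg ((Q 0 0)^2 + (Q 0 1)^2 + (Q 0 2)^2 - (Q 0 0)/3 - 2/9),
          sq_nonneg ((Q 0 1)^2 + (Q 1 1)^2 + (Q 1 2)^2 - (Q 1 1)/3 - 2/9),
          sq_nonneg ((Q 0 0)*(Q 0 1) + (Q 0 1)*(Q 1 1) + (Q 0 2)*(Q 1 2) - (Q 0 1)/3),
          sq_nonneg ((Q 0 0)*(Q 0 2) + (Q 0 1)*(Q 1 2) + (Q 0 2)*(-(Q 0 0)-(Q 1 1)) - (Q 0 2)/3),
          sq_nonneg ((Q 0 1)*(Q 0 2) + (Q 1 1)*(Q 1 2) + (Q 1 2)*(-(Q 0 0)-(Q 1 1)) - (Q 1 2)/3)]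
      have hsq : ((Q 0 2)^2 + (Q 1 2)^2 + ((Q 0 0)+(Q 1 1))^2 + ((Q 0 0)+(Q 1 1))/3 - 2/9)^2 = 0 := le_antisymm hle (sq_nonneg _)
      exact pow_eq_zero_iff two_ne_zero |>.mp hsq
    have hN01 : (Q 0 0)*(Q 0 1) + (Q 0 1)*(Q 1 1) + (Q 0 2)*(Q 1 2) - (Q 0 1)/3 = 0 := by
      have hle : ((Q 0 0)*(Q 0 1) + (Q 0 1)*(Q 1 1) + (Q 0 2)*(Q 1 2) - (Q 0 1)/3)^2 ≤ 0 := by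
        linarith [sq_nonneg ((Q 0 0)^2 + (Q 0 1)^2 + (Q 0 2)^2 - (Q 0 0)/3 - 2/9),
          sq_nonneg ((Q 0 1)^2 + (Q 1 1)^2 + (Q 1 2)^2 - (Q 1 1)/3 - 2/9),
          sq_nonneg ((Q 0 2)^2 + (Q 1 2)^2 + ((Q 0 0)+(Q 1 1))^2 + ((Q 0 0)+(Q 1 1))/3 - 2/9),
          sq_nonneg ((Q 0 0)*(Q 0 2) + (Q 0 1)*(Q 1 2) + (Q 0 2)*(-(Q 0 0)-(Q 1 1)) - (Q 0 2)/3),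
          sq_nonneg ((Q 0 1)*(Q 0 2) + (Q 1 1)*(Q 1 2) + (Q 1 2)*(-(Q 0 0)-(Q 1 1)) - (Q 1 2)/3)]
      have hsq : ((Q 0 0)*(Q 0 1) + (Q 0 1)*(Q 1 1) + (Q 0 2)*(Q 1 2) - (Q 0 1)/3)^2 = 0 := le_antisymm hle (sq_nonneg _)
      exact pow_eq_zero_iff two_ne_zero |>.mp hsq
    have hN02 : (Q 0 0)*(Q 0 2) + (Q 0 1)*(Q 1 2) + (Q 0 2)*(-(Q 0 0)-(Q 1 1)) - (Q 0 2)/3 = 0 := by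
      have hle : ((Q 0 0)*(Q 0 2) + (Q 0 1)*(Q 1 2) + (Q 0 2)*(-(Q 0 0)-(Q 1 1)) - (Q 0 2)/3)^2 ≤ 0 := by
        linarith [sq_nonneg ((Q 0 0)^2 + (Q 0 1)^2 + (Q 0 2)^2 - (Q 0 0)/3 - 2/9),
          sq_nonneg ((Q 0 1)^2 + (Q 1 1)^2 + (Q 1 2)^2 - (Q 1 1)/3 - 2/9),
          sq_nonneg ((Q 0 2)^2 + (Q 1 2)^2 + ((Q 0 0)+(Q 1 1))^2 + ((Q 0 0)+(Q 1 1))/3 - 2/9),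
          sq_nonneg ((Q 0 0)*(Q 0 1) + (Q 0 1)*(Q 1 1) + (Q 0 2)*(Q 1 2) - (Q 0 1)/3),
          sq_nonneg ((Q 0 1)*(Q 0 2) + (Q 1 1)*(Q 1 2) + (Q 1 2)*(-(Q 0 0)-(Q 1 1)) - (Q 1 2)/3)]
      have hsq : ((Q 0 0)*(Q 0 2) + (Q 0 1)*(Q 1 2) + (Q 0 2)*(-(Q 0 0)-(Q 1 1)) - (Q 0 2)/3)^2 = 0 := le_antisymm hle (sq_nonneg _)
      exact pow_eq_zero_iff two_ne_zero |>.mp hsq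
    have hN12 : (Q 0 1)*(Q 0 2) + (Q 1 1)*(Q 1 2) + (Q 1 2)*(-(Q 0 0)-(Q 1 1)) - (Q 1 2)/3 = 0 := by
      have hle : ((Q 0 1)*(Q 0 2) + (Q 1 1)*(Q 1 2) + (Q 1 2)*(-(Q 0 0)-(Q 1 1)) - (Q 1 2)/3)^2 ≤ 0 := by
        linarith [sq_nonneg ((Q 0 0)^2 + (Q 0 1)^2 + (Q 0 2)^2 - (Q 0 0)/3 - 2/9),
          sq_nonneg ((Q 0 1)^2 + (Q 1 1)^2 + (Q 1 2)^2 - (Q 1 1)/3 - 2/9),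
          sq_nonneg ((Q 0 2)^2 + (Q 1 2)^2 + ((Q 0 0)+(Q 1 1))^2 + ((Q 0 0)+(Q 1 1))/3 - 2/9),
          sq_nonneg ((Q 0 0)*(Q 0 1) + (Q 0 1)*(Q 1 1) + (Q 0 2)*(Q 1 2) - (Q 0 1)/3),
          sq_nonneg ((Q 0 0)*(Q 0 2) + (Q 0 1)*(Q 1 2) + (Q 0 2)*(-(Q 0 0)-(Q 1 1)) - (Q 0 2)/3)]
      have hsq : ((Q 0 1)*(Q 0 2) + (Q 1 1)*(Q 1 2) + (Q 1 2)*(-(Q 0 0)-(Q 1 1)) - (Q 1 2)/3)^2 = 0 := le_antisymm hle (sq_nonneg _)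
      exact pow_eq_zero_iff two_ne_zero |>.mp hsq
    have htrP : ((Q 0 0) + 1/3) + ((Q 1 1) + 1/3) + (1/3 - (Q 0 0) - (Q 1 1)) = 1 := by ring
    have F00 : ((Q 0 0)+1/3)^2 + (Q 0 1)^2 + (Q 0 2)^2 = (Q 0 0)+1/3 := by linear_combination hN00
    have F01 : ((Q 0 0)+1/3)*(Q 0 1) + (Q 0 1)*((Q 1 1)+1/3) + (Q 0 2)*(Q 1 2) = (Q 0 1) := by linear_combination hN01
    have F02 : ((Q 0 0)+1/3)*(Q 0 2) + (Q 0 1)*(Q 1 2) + (Q 0 2)*(1/3-(Q 0 0)-(Q 1 1)) = (Q 0 2) := by linear_combination hN02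
    have F11 : (Q 0 1)^2 + ((Q 1 1)+1/3)^2 + (Q 1 2)^2 = (Q 1 1)+1/3 := by linear_combination hN11
    have F12 : (Q 0 1)*(Q 0 2) + ((Q 1 1)+1/3)*(Q 1 2) + (Q 1 2)*(1/3-(Q 0 0)-(Q 1 1)) = (Q 1 2) := by linear_combination hN12
    have F22 : (Q 0 2)^2 + (Q 1 2)^2 + (1/3-(Q 0 0)-(Q 1 1))^2 = 1/3-(Q 0 0)-(Q 1 1) := by linear_combination hN22
    have hcase : 0 < (Q 0 0) + 1/3 ∨ 0 < (Q 1 1) + 1/3 ∨ 0 < 1/3 - (Q 0 0) - (Q 1 1) := by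
      by_contra h
      push_neg at h
      obtain ⟨h1, h2, h3⟩ := h
      linarith
    have hgoal : ∃ n0 n1 n2 : ℝ, (n0^2 + n1^2 + n2^2 = 1) ∧
        n0*n0 = (Q 0 0) + 1/3 ∧ n0*n1 = (Q 0 1) ∧ n0*n2 = (Q 0 2) ∧ n1*n1 = (Q 1 1) + 1/3 ∧
        n1*n2 = (Q 1 2) ∧ n2*n2 = 1/3 - (Q 0 0) - (Q 1 1) := by
      rcases hcase with hp | hp | hp
      · exact proj_aux _ _ _ _ _ _ htrP F00 F01 F02 F11 F12 F22 hp
      · obtain ⟨m0, m1, m2, hsum, q00, q01, q02, q11, q12, q22⟩ :=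
          proj_aux ((Q 1 1)+1/3) (Q 0 1) (Q 1 2) ((Q 0 0)+1/3) (Q 0 2) (1/3-(Q 0 0)-(Q 1 1))
            (by linarith) (by linear_combination F11) (by linear_combination F01)
            (by linear_combination F12) (by linear_combination F00)
            (by linear_combination F02) (by linear_combination F22) hp
        exact ⟨m1, m0, m2, by linarith, q11, by linarith [q01, mul_comm m0 m1],
          q12, q00, q02, q22⟩
      · obtain ⟨m0, m1, m2, hsum, q00, q01, q02, q11, q12, q22⟩ :=
          proj_aux (1/3-(Q 0 0)-(Q 1 1)) (Q 1 2) (Q 0 2) ((Q 1 1)+1/3) (Q 0 1) ((Q 0 0)+1/3)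
            (by linarith) (by linear_combination F22) (by linear_combination F12)
            (by linear_combination F02) (by linear_combination F11)
            (by linear_combination F01) (by linear_combination F00) hp
        exact ⟨m2, m1, m0, by linarith, q22, by linarith [q12, mul_comm m1 m2],
          by linarith [q02, mul_comm m0 m2], q11,
          by linarith [q01, mul_comm m0 m1], q00⟩
    obtain ⟨n0, n1, n2, hsum, q00, q01, q02, q11, q12, q22⟩ := hgoal
    clear hf hkey hS hN00 hN11 hN22 hN01 hN02 hN12 F00 F01 F02 F11 F12 F22 htrP hf0
    refine ⟨![n0, n1, n2], ?_, ?_⟩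
    · simp [Fin.sum_univ_three]
      linear_combination hsum
    · ext i j
      fin_cases i <;> fin_cases j <;>
        simp [Matrix.vecMulVec_apply, Matrix.sub_apply, Matrix.smul_apply,
          Matrix.one_apply] <;>
        linarith only [q00, q01, q02, q11, q12, q22, h10, h20, h21, h22]
  · -- backward direction
    rintro ⟨n, hn, hQeq⟩
    simp [Fin.sum_univ_three] at hn
    have g00 : (Q 0 0) = n 0 * n 0 - 1/3 := by
      rw [hQeq]; simp [Matrix.vecMulVec_apply, Matrix.sub_apply,
        Matrix.smul_apply, Matrix.one_apply]
    have g11 : (Q 1 1) = n 1 * n 1 - 1/3 := by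
      rw [hQeq]; simp [Matrix.vecMulVec_apply, Matrix.sub_apply,
        Matrix.smul_apply, Matrix.one_apply]
    have g01 : (Q 0 1) = n 0 * n 1 := by
      rw [hQeq]; simp [Matrix.vecMulVec_apply, Matrix.sub_apply,
        Matrix.smul_apply, Matrix.one_apply]
    have g02 : (Q 0 2) = n 0 * n 2 := by
      rw [hQeq]; simp [Matrix.vecMulVec_apply, Matrix.sub_apply,
        Matrix.smul_apply, Matrix.one_apply]
    have g12 : (Q 1 2) = n 1 * n 2 := by
      rw [hQeq]; simp [Matrix.vecMulVec_apply, Matrix.sub_apply,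
        Matrix.smul_apply, Matrix.one_apply]
    rw [hkey, g00, g11, g01, g02, g12]
    linear_combination (-3 * n 1^4 + 3 * n 1^4 * n 2^2 + 3 * n 1^6
      - 6 * n 0^2 * n 1^2 + 6 * n 0^2 * n 1^2 * n 2^2 + 9 * n 0^2 * n 1^4
      - 3 * n 0^4 + 3 * n 0^4 * n 2^2 + 9 * n 0^4 * n 1^2 + 3 * n 0^6) * hn
end

section
/- Define g(Q) = √(2/3) − Q₃₃/|Q| for Q ∈ 𝒮₀ \ {0} (with g(0) := 0), where Q₃₃ is the (3,3) entry and |Q| the Frobenius norm. Then g(Q) ≥ 0 for all Q ∈ 𝒮₀, and g(Q) = 0 if and only if Q = s·Q_∞ for some s ≥ 0, where Q_∞ = e₃⊗e₃ − (1/3)I. -/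
/-!
Write `a, b, c = -(a + b)` for the diagonal of a symmetric traceless `Q` and `d, e, f` for its
entries above the diagonal. Then `2|Q|² - 3c² = (a - b)² + 4(d² + e² + f²)`, so `c ≤ √(2/3)·|Q|`,
with equality exactly when `c ≥ 0`, `a = b` and `Q` is diagonal, that is, when `Q = (3c/2)·Q_∞`.
-/

open Matrix

noncomputable def uniaxialQ : Matrix (Fin 3) (Fin 3) ℝ :=
  vecMulVec ![0, 0, 1] ![0, 0, 1] - (1/3 : ℝ) • (1 : Matrix (Fin 3) (Fin 3) ℝ)

theorem uniaxialQ_eq : uniaxialQ = !![-1/3, 0, 0; 0, -1/3, 0; 0, 0, 2/3] := by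
  ext i j
  fin_cases i <;> fin_cases j <;> norm_num [uniaxialQ, vecMulVec_apply, one_apply]

theorem Matrix.sum_sq_eq_zero_iff {m n R : Type*} [Fintype m] [Fintype n] [Ring R]
    [LinearOrder R] [IsStrictOrderedRing R] (Q : Matrix m n R) :
    ∑ i, ∑ j, Q i j ^ 2 = 0 ↔ Q = 0 := by
  simp [Fintype.sum_eq_zero_iff_of_nonneg, Pi.le_def, sq_nonneg, Finset.sum_nonneg,
    funext_iff, Matrix.ext_iff.symm]

namespace Matrix.IsSymm

theorem two_mul_sum_sq_sub_three_mul_sq {R : Type*} [CommRing R] {Q : Matrix (Fin 3) (Fin 3) R}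
    (hQ : Q.IsSymm) (htr : Q.trace = 0) :
    2 * ∑ i, ∑ j, Q i j ^ 2 - 3 * Q 2 2 ^ 2
      = (Q 0 0 - Q 1 1) ^ 2 + 4 * (Q 0 1 ^ 2 + Q 0 2 ^ 2 + Q 1 2 ^ 2) := by
  have hc : Q 2 2 = -(Q 0 0 + Q 1 1) := by
    rw [trace_fin_three] at htr
    linear_combination htr
  simp only [Fin.sum_univ_three, hQ.apply 0 1, hQ.apply 0 2, hQ.apply 1 2, hc]
  ring

theorem three_mul_sq_le_two_mul_sum_sq {R : Type*} [CommRing R] [LinearOrder R]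
    [IsStrictOrderedRing R] {Q : Matrix (Fin 3) (Fin 3) R} (hQ : Q.IsSymm) (htr : Q.trace = 0) :
    3 * Q 2 2 ^ 2 ≤ 2 * ∑ i, ∑ j, Q i j ^ 2 := by
  have hsos := hQ.two_mul_sum_sq_sub_three_mul_sq htr
  have : 0 ≤ 2 * ∑ i, ∑ j, Q i j ^ 2 - 3 * Q 2 2 ^ 2 := by
    rw [hsos]
    positivity
  linarith

theorem exists_nonneg_smul_uniaxialQ_iff {Q : Matrix (Fin 3) (Fin 3) ℝ} (hQ : Q.IsSymm)
    (htr : Q.trace = 0) :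
    (∃ s : ℝ, 0 ≤ s ∧ Q = s • uniaxialQ) ↔
      0 ≤ Q 2 2 ∧ 3 * Q 2 2 ^ 2 = 2 * ∑ i, ∑ j, Q i j ^ 2 := by
  constructor
  · rintro ⟨s, hs, rfl⟩
    simp only [uniaxialQ_eq, Fin.sum_univ_three, smul_apply, of_apply, cons_val', cons_val,
      empty_val', cons_val_fin_one, smul_eq_mul]
    constructor
    · positivity
    · ring
  · rintro ⟨hc, heq⟩
    have hsos := hQ.two_mul_sum_sq_sub_three_mul_sq htr
    rw [← heq, sub_self] at hsos
    have h01 : Q 0 1 ^ 2 = 0 := by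
      linarith [sq_nonneg (Q 0 0 - Q 1 1), sq_nonneg (Q 0 1), sq_nonneg (Q 0 2), sq_nonneg (Q 1 2)]
    have h02 : Q 0 2 ^ 2 = 0 := by
      linarith [sq_nonneg (Q 0 0 - Q 1 1), sq_nonneg (Q 0 1), sq_nonneg (Q 0 2), sq_nonneg (Q 1 2)]
    have h12 : Q 1 2 ^ 2 = 0 := by
      linarith [sq_nonneg (Q 0 0 - Q 1 1), sq_nonneg (Q 0 1), sq_nonneg (Q 0 2), sq_nonneg (Q 1 2)]
    have hab : (Q 0 0 - Q 1 1) ^ 2 = 0 := by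
      linarith [sq_nonneg (Q 0 0 - Q 1 1), sq_nonneg (Q 0 1), sq_nonneg (Q 0 2), sq_nonneg (Q 1 2)]
    simp only [pow_eq_zero_iff two_ne_zero, sub_eq_zero] at h01 h02 h12 hab
    rw [trace_fin_three] at htr
    refine ⟨3 / 2 * Q 2 2, by positivity, ?_⟩
    ext i j
    fin_cases i <;> fin_cases j <;>
      simp [uniaxialQ_eq, hQ.apply 0 1, hQ.apply 0 2, hQ.apply 1 2, h01, h02, h12] <;> linarith

theorem entry_le_sqrt_mul_sqrt {Q : Matrix (Fin 3) (Fin 3) ℝ} (hQ : Q.IsSymm)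
    (htr : Q.trace = 0) :
    Q 2 2 ≤ √(2 / 3) * √(∑ i, ∑ j, Q i j ^ 2) := by
  rw [← Real.sqrt_mul (by norm_num)]
  exact Real.le_sqrt_of_sq_le (by linarith [hQ.three_mul_sq_le_two_mul_sum_sq htr])

theorem entry_eq_sqrt_mul_sqrt_iff {Q : Matrix (Fin 3) (Fin 3) ℝ} (hQ : Q.IsSymm)
    (htr : Q.trace = 0) :
    Q 2 2 = √(2 / 3) * √(∑ i, ∑ j, Q i j ^ 2) ↔ ∃ s : ℝ, 0 ≤ s ∧ Q = s • uniaxialQ := by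
  rw [hQ.exists_nonneg_smul_uniaxialQ_iff htr, ← Real.sqrt_mul (by norm_num)]
  constructor
  · intro h
    refine ⟨h ▸ Real.sqrt_nonneg _, ?_⟩
    rw [h, Real.sq_sqrt (by positivity)]
    ring
  · rintro ⟨hc, h⟩
    rw [eq_comm, Real.sqrt_eq_iff_eq_sq (by positivity) hc]
    linarith

end Matrix.IsSymm

/-- The magnetic potential `g(Q) = √(2/3) − Q₃₃/|Q|` (with `g(0) = 0`) is nonnegative
on symmetric traceless `3×3` matrices, and vanishes exactly when `Q = s·Q_∞` for
some `s ≥ 0`, where `Q_∞ = e₃⊗e₃ − (1/3)I`. -/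
theorem stmt5 (Q : Matrix (Fin 3) (Fin 3) ℝ)
    (hsymm : Q.transpose = Q) (htr : Q.trace = 0)
    (g : ℝ)
    (hg : g = if Q = 0 then 0
      else Real.sqrt (2/3) - Q 2 2 / Real.sqrt (∑ i, ∑ j, Q i j ^ 2)) :
    0 ≤ g ∧
    (g = 0 ↔ ∃ s : ℝ, 0 ≤ s ∧
      Q = s • (Matrix.vecMulVec ![0, 0, 1] ![0, 0, 1]
        - (1/3 : ℝ) • (1 : Matrix (Fin 3) (Fin 3) ℝ))) := by
  have hQ : Q.IsSymm := hsymm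
  subst hg
  by_cases hQ0 : Q = 0
  · subst hQ0
    rw [if_pos rfl]
    exact ⟨le_rfl, iff_of_true rfl ⟨0, le_rfl, (zero_smul ℝ _).symm⟩⟩
  have hN : 0 < √(∑ i, ∑ j, Q i j ^ 2) :=
    Real.sqrt_pos.2 <| lt_of_le_of_ne (by positivity) (Ne.symm ((sum_sq_eq_zero_iff Q).not.2 hQ0))
  rw [if_neg hQ0, sub_nonneg, sub_eq_zero, div_le_iff₀ hN, eq_comm, div_eq_iff hN.ne']
  exact ⟨hQ.entry_le_sqrt_mul_sqrt htr, hQ.entry_eq_sqrt_mul_sqrt_iff htr⟩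
end

section
/- Consider the function F(n₁, n₂) = 3 − √(1 − n₁²) − √(1 − n₂²) − √(n₁² + n₂²) on the closed unit disk D = {(n₁,n₂) : n₁² + n₂² ≤ 1}. Then F attains its minimum value 3 − 3·√(2/3) = 3 − √6 exactly at the four points (±1/√3, ±1/√3). -/
/-!
With `a = 1 - n₁²`, `b = 1 - n₂²`, `c = n₁² + n₂²` (all nonnegative on the disk, with
`a + b + c = 2`), the energy is `3 - (√a + √b + √c)`. By the power-mean inequality
`(√a + √b + √c)² ≤ 3 (a + b + c) = 6`, with equality exactly when `a = b = c = 2/3`,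
i.e. when `n₁² = n₂² = 1/3`.
-/

open Real

lemma sq_add_add_le_three_mul (p q r : ℝ) : (p + q + r) ^ 2 ≤ 3 * (p ^ 2 + q ^ 2 + r ^ 2) := by
  nlinarith [sq_nonneg (p - q), sq_nonneg (q - r), sq_nonneg (p - r)]

lemma sq_add_add_eq_three_mul_iff (p q r : ℝ) :
    (p + q + r) ^ 2 = 3 * (p ^ 2 + q ^ 2 + r ^ 2) ↔ p = q ∧ q = r := by
  have hsplit : 3 * (p ^ 2 + q ^ 2 + r ^ 2) - (p + q + r) ^ 2
      = (p - q) ^ 2 + (q - r) ^ 2 + (p - r) ^ 2 := by ring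
  constructor
  · intro h
    have hpq : (p - q) ^ 2 = 0 := by nlinarith [sq_nonneg (q - r), sq_nonneg (p - r)]
    have hqr : (q - r) ^ 2 = 0 := by nlinarith [sq_nonneg (p - q), sq_nonneg (p - r)]
    exact ⟨sub_eq_zero.mp (pow_eq_zero_iff two_ne_zero |>.mp hpq),
      sub_eq_zero.mp (pow_eq_zero_iff two_ne_zero |>.mp hqr)⟩
  · rintro ⟨rfl, rfl⟩
    ring

lemma sqrt_add_sqrt_add_sqrt_le {a b c : ℝ} (ha : 0 ≤ a) (hb : 0 ≤ b) (hc : 0 ≤ c) :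
    √a + √b + √c ≤ √(3 * (a + b + c)) := by
  rw [le_sqrt (by positivity) (by positivity)]
  simpa only [sq_sqrt ha, sq_sqrt hb, sq_sqrt hc] using sq_add_add_le_three_mul √a √b √c

lemma sqrt_add_sqrt_add_sqrt_eq_iff {a b c : ℝ} (ha : 0 ≤ a) (hb : 0 ≤ b) (hc : 0 ≤ c) :
    √a + √b + √c = √(3 * (a + b + c)) ↔ a = b ∧ b = c := by
  rw [eq_comm, sqrt_eq_iff_eq_sq (by positivity) (by positivity), eq_comm]
  have h := sq_add_add_eq_three_mul_iff √a √b √c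
  rwa [sq_sqrt ha, sq_sqrt hb, sq_sqrt hc, sqrt_inj ha hb, sqrt_inj hb hc] at h

lemma sqrt_six_eq_sqrt_three_mul_sum (x y : ℝ) :
    √6 = √(3 * ((1 - x ^ 2) + (1 - y ^ 2) + (x ^ 2 + y ^ 2))) := by
  ring_nf

section UnitDisk

variable {x y : ℝ}

lemma one_sub_sq_nonneg_left (h : x ^ 2 + y ^ 2 ≤ 1) : 0 ≤ 1 - x ^ 2 := by
  nlinarith [sq_nonneg y]

lemma one_sub_sq_nonneg_right (h : x ^ 2 + y ^ 2 ≤ 1) : 0 ≤ 1 - y ^ 2 := by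
  nlinarith [sq_nonneg x]

lemma sqrt_one_sub_sq_add_sqrt_one_sub_sq_add_sqrt_le (h : x ^ 2 + y ^ 2 ≤ 1) :
    √(1 - x ^ 2) + √(1 - y ^ 2) + √(x ^ 2 + y ^ 2) ≤ √6 := by
  rw [sqrt_six_eq_sqrt_three_mul_sum]
  exact sqrt_add_sqrt_add_sqrt_le (one_sub_sq_nonneg_left h) (one_sub_sq_nonneg_right h)
    (by positivity)

lemma sqrt_one_sub_sq_add_sqrt_one_sub_sq_add_sqrt_eq_iff (h : x ^ 2 + y ^ 2 ≤ 1) :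
    √(1 - x ^ 2) + √(1 - y ^ 2) + √(x ^ 2 + y ^ 2) = √6 ↔ x ^ 2 = 1 / 3 ∧ y ^ 2 = 1 / 3 := by
  rw [sqrt_six_eq_sqrt_three_mul_sum, sqrt_add_sqrt_add_sqrt_eq_iff (one_sub_sq_nonneg_left h)
    (one_sub_sq_nonneg_right h) (by positivity)]
  constructor <;> intro <;> constructor <;> linarith

end UnitDisk

lemma sq_eq_one_third_iff (x : ℝ) : x ^ 2 = 1 / 3 ↔ x = 1 / √3 ∨ x = -(1 / √3) := by
  rw [← sq_eq_sq_iff_eq_or_eq_neg, div_pow, sq_sqrt (by norm_num : (0 : ℝ) ≤ 3), one_pow]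

lemma three_mul_sqrt_two_thirds : 3 * √(2 / 3) = √6 := by
  rw [show (6 : ℝ) = 3 ^ 2 * (2 / 3) by norm_num, sqrt_mul (by positivity),
    sqrt_sq (by norm_num : (0 : ℝ) ≤ 3)]

/-- The cube surface energy
`F(n₁,n₂) = 3 − √(1−n₁²) − √(1−n₂²) − √(n₁²+n₂²)` on the closed unit disk attains
its minimum value `3 − 3√(2/3) = 3 − √6` exactly at the four points `(±1/√3, ±1/√3)`. -/
theorem stmt12 (F : ℝ → ℝ → ℝ)
    (hF : F = fun x y =>
      3 - Real.sqrt (1 - x ^ 2) - Real.sqrt (1 - y ^ 2) - Real.sqrt (x ^ 2 + y ^ 2)) :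
    ((3 : ℝ) - 3 * Real.sqrt (2/3) = 3 - Real.sqrt 6) ∧
    (∀ x y : ℝ, x ^ 2 + y ^ 2 ≤ 1 → 3 - Real.sqrt 6 ≤ F x y) ∧
    (∀ x y : ℝ, x ^ 2 + y ^ 2 ≤ 1 →
      (F x y = 3 - Real.sqrt 6 ↔
        (x = 1 / Real.sqrt 3 ∨ x = -(1 / Real.sqrt 3)) ∧
        (y = 1 / Real.sqrt 3 ∨ y = -(1 / Real.sqrt 3)))) := by
  subst hF
  refine ⟨by rw [three_mul_sqrt_two_thirds], fun x y h => ?_, fun x y h => ?_⟩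
  · linarith [sqrt_one_sub_sq_add_sqrt_one_sub_sq_add_sqrt_le h]
  · rw [← sq_eq_one_third_iff, ← sq_eq_one_third_iff,
      ← sqrt_one_sub_sq_add_sqrt_one_sub_sq_add_sqrt_eq_iff h]
    constructor <;> intro <;> linarith
end

section
/- The function F(n₁, n₂) = 3 − √(1 − n₁²) − √(1 − n₂²) − √(n₁² + n₂²) on the closed unit disk attains its maximum value 1 exactly at the points (0,0), (±1, 0), and (0, ±1). -/
/-
With a = 1 − n₁², b = 1 − n₂², c = n₁² + n₂², all in [0, 1] on the disk, one has a + b + c = 2 and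
F = 1 − ((√a − a) + (√b − b) + (√c − c)). Since √t ≥ t on [0, 1], with equality only at t = 0 and
t = 1, we get F ≤ 1, and F = 1 forces n₁², n₂² ∈ {0, 1}; the disk then leaves the five points.
-/

lemma one_sub_sq_le_sqrt (x : ℝ) : 1 - x ^ 2 ≤ √(1 - x ^ 2) :=
  Real.le_sqrt_self_iff.2 (sub_le_self _ (sq_nonneg x))

lemma sqrt_one_sub_sq_le_iff {x : ℝ} : √(1 - x ^ 2) ≤ 1 - x ^ 2 ↔ x = 0 ∨ x = 1 ∨ x = -1 := by
  rw [Real.sqrt_le_self_iff, sub_eq_zero, eq_comm, sq_eq_one_iff, le_sub_self_iff, sq_nonpos_iff]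
  tauto

/-- The cube surface energy
`F(n₁,n₂) = 3 − √(1−n₁²) − √(1−n₂²) − √(n₁²+n₂²)` on the closed unit disk attains
its maximum value `1` exactly at `(0,0)`, `(±1,0)`, `(0,±1)`. -/
theorem stmt13 (F : ℝ → ℝ → ℝ)
    (hF : F = fun x y =>
      3 - Real.sqrt (1 - x ^ 2) - Real.sqrt (1 - y ^ 2) - Real.sqrt (x ^ 2 + y ^ 2)) :
    (∀ x y : ℝ, x ^ 2 + y ^ 2 ≤ 1 → F x y ≤ 1) ∧
    (∀ x y : ℝ, x ^ 2 + y ^ 2 ≤ 1 →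
      (F x y = 1 ↔
        (x = 0 ∧ y = 0) ∨ (x = 1 ∧ y = 0) ∨ (x = -1 ∧ y = 0) ∨
        (x = 0 ∧ y = 1) ∨ (x = 0 ∧ y = -1))) := by
  subst hF
  refine ⟨fun x y h => ?_, fun x y h => ⟨fun hmax => ?_, ?_⟩⟩
  · linarith [one_sub_sq_le_sqrt x, one_sub_sq_le_sqrt y, Real.le_sqrt_self_iff.2 h]
  · beta_reduce at hmax
    have hc := Real.le_sqrt_self_iff.2 h
    have hx : x = 0 ∨ x = 1 ∨ x = -1 :=
      sqrt_one_sub_sq_le_iff.1 (by linarith [one_sub_sq_le_sqrt y])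
    have hy : y = 0 ∨ y = 1 ∨ y = -1 :=
      sqrt_one_sub_sq_le_iff.1 (by linarith [one_sub_sq_le_sqrt x])
    rcases hx with rfl | rfl | rfl <;> rcases hy with rfl | rfl | rfl <;> revert h <;> norm_num
  · rintro (⟨rfl, rfl⟩ | ⟨rfl, rfl⟩ | ⟨rfl, rfl⟩ | ⟨rfl, rfl⟩ | ⟨rfl, rfl⟩) <;> norm_num
end
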